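/- arXiv:2204.06794 — 8 statements merged into one kernel-verified Lean document; each statement's English description precedes it below -/
import Mathlib

section
/- Let θ ∈ [0, π/2). If p ∈ ℝ³ satisfies p̄ ≠ 0 and p_z < ‖p‖·cos(θ), then the vector d = (sin(θ)·p̄/‖p̄‖, cos(θ)) belongs to D and maximizes w ↦ ⟨p, w⟩ over D; that is, for every w ∈ D one has ⟨p, w⟩ ≤ ⟨p, d⟩ = sin(θ)‖p̄‖ + cos(θ)·p_z. -/
open RealInnerProductSpace

/-- The projection of `p ∈ ℝ³` onto its first two coordinates. -/
noncomputable def bar (p : EuclideanSpace ℝ (Fin 3)) : EuclideanSpace ℝ (Fin 2) := WithLp.toLp 2 ![p 0, p 1]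

/-- For `δ ∈ ℝ²` and `c ∈ ℝ`, the vector `(δ₁, δ₂, c) ∈ ℝ³`. -/
noncomputable def withZ (δ : EuclideanSpace ℝ (Fin 2)) (c : ℝ) : EuclideanSpace ℝ (Fin 3) :=
  WithLp.toLp 2 ![δ 0, δ 1, c]

/-- The cone-restricted unit sphere `D = {d : ‖d‖ = 1 ∧ d_z ≥ cos θ}`. -/
def D (θ : ℝ) : Set (EuclideanSpace ℝ (Fin 3)) :=
  {d | ‖d‖ = 1 ∧ d 2 ≥ Real.cos θ}

lemma key_ineq (a b s t c σ r : ℝ) (ha : 0 < a) (hs : 0 ≤ s) (hσ : 0 ≤ σ) (hc : 0 < c)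
    (h1 : s^2 + t^2 = 1) (h2 : c^2 + σ^2 = 1) (ht : c ≤ t)
    (hr : 0 < r) (hr2 : r^2 = a^2 + b^2) (hb : b < r * c) :
    a * s + b * t ≤ a * σ + b * c := by
  have hsσ : s ≤ σ := by nlinarith
  have hA : 0 ≤ a * (t + c) - b * (σ + s) := by
    rcases le_or_gt b 0 with hb0 | hb0
    · nlinarith [mul_nonpos_of_nonpos_of_nonneg hb0 (by positivity : (0:ℝ) ≤ σ + s)]
    · have hb2 : b^2 < r^2 * c^2 := by nlinarith
      have haσ : r * σ ≤ a := by nlinarith [sq_nonneg σ, mul_nonneg hr.le hσ]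
      have hbσ : b * σ < a * c := by
        rcases eq_or_lt_of_le hσ with h | h
        · nlinarith
        · nlinarith [mul_lt_mul_of_pos_right hb h, mul_le_mul_of_nonneg_right haσ hc.le]
      nlinarith [mul_le_mul_of_nonneg_left hsσ hb0.le]
  rcases eq_or_lt_of_le (by positivity : (0:ℝ) ≤ σ + s) with h0 | h0
  · have hσ0 : σ = 0 := by linarith
    have hs0 : s = 0 := by linarith
    have hc1 : c = 1 := by nlinarith
    have ht1 : t = 1 := by nlinarith
    simp [hσ0, hs0, hc1, ht1]
  · have h3 := mul_nonneg (sub_nonneg.2 ht) hA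
    have hid : (σ + s) * (a * σ + b * c - (a * s + b * t))
        = (t - c) * (a * (t + c) - b * (σ + s)) := by
      ring_nf
      nlinarith [h1, h2]
    have h4 : 0 ≤ (σ + s) * (a * σ + b * c - (a * s + b * t)) := hid ▸ h3
    linarith [(mul_nonneg_iff_of_pos_left h0).mp h4]

lemma norm3_sq (x : EuclideanSpace ℝ (Fin 3)) : ‖x‖^2 = x 0^2 + x 1^2 + x 2^2 := by
  rw [EuclideanSpace.norm_eq, Real.sq_sqrt (by positivity)]
  simp [Fin.sum_univ_three, sq_abs]

lemma norm2_sq (x : EuclideanSpace ℝ (Fin 2)) : ‖x‖^2 = x 0^2 + x 1^2 := by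
  rw [EuclideanSpace.norm_eq, Real.sq_sqrt (by positivity)]
  simp [Fin.sum_univ_two, sq_abs]

/-- If `p̄ ≠ 0` and `p_z < ‖p‖ cos θ`, then `d = (sin θ · p̄/‖p̄‖, cos θ)` belongs to `D`
and maximizes `w ↦ ⟨p, w⟩` over `D`, with maximal value `sin θ ‖p̄‖ + cos θ p_z`. -/
theorem stmt1 (θ : ℝ) (hθ0 : 0 ≤ θ) (hθ1 : θ < Real.pi / 2)
    (p : EuclideanSpace ℝ (Fin 3)) (hpbar : bar p ≠ 0)
    (hpz : p 2 < ‖p‖ * Real.cos θ) :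
    withZ (Real.sin θ • ‖bar p‖⁻¹ • bar p) (Real.cos θ) ∈ D θ ∧
    (∀ w ∈ D θ, ⟪p, w⟫ ≤ ⟪p, withZ (Real.sin θ • ‖bar p‖⁻¹ • bar p) (Real.cos θ)⟫) ∧
    ⟪p, withZ (Real.sin θ • ‖bar p‖⁻¹ • bar p) (Real.cos θ)⟫
      = Real.sin θ * ‖bar p‖ + Real.cos θ * p 2 := by
  set σ := Real.sin θ with hσdef
  set c := Real.cos θ with hcdef
  set a := ‖bar p‖ with hadef
  set d := withZ (σ • a⁻¹ • bar p) c with hddef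
  have hc : 0 < c := Real.cos_pos_of_mem_Ioo ⟨by linarith [Real.pi_pos], hθ1⟩
  have hσ : 0 ≤ σ := Real.sin_nonneg_of_nonneg_of_le_pi hθ0 (by linarith [Real.pi_pos])
  have hσc : c^2 + σ^2 = 1 := by
    rw [hσdef, hcdef]; nlinarith [Real.sin_sq_add_cos_sq θ]
  have ha : 0 < a := norm_pos_iff.mpr hpbar
  have ha2 : a^2 = p 0^2 + p 1^2 := by
    rw [hadef, norm2_sq]; rfl
  have hd0 : d 0 = σ * (a⁻¹ * p 0) := rfl
  have hd1 : d 1 = σ * (a⁻¹ * p 1) := rfl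
  have hd2 : d 2 = c := rfl
  have hval : ⟪p, d⟫ = σ * a + c * p 2 := by
    have : ⟪p, d⟫ = p 0 * d 0 + p 1 * d 1 + p 2 * d 2 := by
      simp [PiLp.inner_apply, Fin.sum_univ_three, mul_comm]
    rw [this, hd0, hd1, hd2]
    have : p 0 * (σ * (a⁻¹ * p 0)) + p 1 * (σ * (a⁻¹ * p 1))
        = σ * a⁻¹ * (p 0^2 + p 1^2) := by ring
    rw [this, ← ha2]
    field_simp
  have hdD : d ∈ D θ := by
    constructor
    · have hnd : ‖d‖^2 = 1 := by
        rw [norm3_sq, hd0, hd1, hd2]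
        have : (σ * (a⁻¹ * p 0))^2 + (σ * (a⁻¹ * p 1))^2 + c^2
            = σ^2 * (a⁻¹)^2 * (p 0^2 + p 1^2) + c^2 := by ring
        rw [this, ← ha2]
        field_simp
        linarith [hσc]
      rw [← Real.sqrt_sq (norm_nonneg d), hnd, Real.sqrt_one]
    · exact le_of_eq hd2.symm
  refine ⟨hdD, ?_, hval⟩
  intro w hw
  obtain ⟨hw1, hw2⟩ := hw
  set s := ‖bar w‖ with hsdef
  set t := w 2 with htdef
  have hs : 0 ≤ s := norm_nonneg _
  have hs2 : s^2 = w 0^2 + w 1^2 := by rw [hsdef, norm2_sq]; rfl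
  have h1 : s^2 + t^2 = 1 := by
    have := norm3_sq w
    rw [hw1] at this
    rw [hs2]; rw [htdef]; nlinarith [this]
  have hr : 0 < ‖p‖ := by
    rcases eq_or_lt_of_le (norm_nonneg p) with h | h
    · exfalso
      have hp0 : p = 0 := (norm_eq_zero.mp h.symm)
      apply hpbar
      rw [hp0]
      ext i
      fin_cases i <;> rfl
    · exact h
  have hr2 : ‖p‖^2 = a^2 + (p 2)^2 := by
    rw [norm3_sq, ha2]
  have hinner : ⟪p, w⟫ ≤ a * s + p 2 * t := by
    have hiw : ⟪p, w⟫ = p 0 * w 0 + p 1 * w 1 + p 2 * w 2 := by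
      simp [PiLp.inner_apply, Fin.sum_univ_three, mul_comm]
    have hbw : ⟪bar p, bar w⟫ = p 0 * w 0 + p 1 * w 1 := by
      simp [bar, PiLp.inner_apply, Fin.sum_univ_two, mul_comm]
    have hcs : ⟪bar p, bar w⟫ ≤ a * s := real_inner_le_norm _ _
    rw [hiw, htdef]
    rw [hbw] at hcs
    linarith
  have hk := key_ineq a (p 2) s t c σ ‖p‖ ha hs hσ hc h1 hσc hw2 hr hr2 hpz
  rw [hval]
  linarith
end

section
/- Let θ ∈ [0, π/2). For every p ∈ ℝ³, the supremum of the linear form w ↦ ⟨p, w⟩ over D equals ‖p‖ if p_z ≥ ‖p‖·cos(θ), and equals sin(θ)‖p̄‖ + cos(θ)·p_z if p_z < ‖p‖·cos(θ). -/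
open RealInnerProductSpace

noncomputable def vec3 (x y z : ℝ) : EuclideanSpace ℝ (Fin 3) :=
  (WithLp.equiv 2 (Fin 3 → ℝ)).symm ![x, y, z]

@[simp] lemma vec3_0 (x y z : ℝ) : vec3 x y z 0 = x := rfl
@[simp] lemma vec3_1 (x y z : ℝ) : vec3 x y z 1 = y := rfl
@[simp] lemma vec3_2 (x y z : ℝ) : vec3 x y z 2 = z := rfl

lemma inner3 (p d : EuclideanSpace ℝ (Fin 3)) : ⟪p, d⟫ = p 0 * d 0 + p 1 * d 1 + p 2 * d 2 := by
  simp [PiLp.inner_apply, Fin.sum_univ_three, RCLike.inner_apply, conj_trivial]; ring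

lemma normsq3 (d : EuclideanSpace ℝ (Fin 3)) : ‖d‖^2 = d 0^2 + d 1^2 + d 2^2 := by
  rw [← real_inner_self_eq_norm_sq, inner3]; ring

lemma normsq2 (p : EuclideanSpace ℝ (Fin 3)) : ‖bar p‖^2 = p 0^2 + p 1^2 := by
  rw [← real_inner_self_eq_norm_sq]
  simp only [bar, PiLp.inner_apply, Fin.sum_univ_two, RCLike.inner_apply, conj_trivial, Matrix.cons_val_zero, Matrix.cons_val_one]
  ring

lemma inner2 (p d : EuclideanSpace ℝ (Fin 3)) : ⟪bar p, bar d⟫ = p 0 * d 0 + p 1 * d 1 := by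
  simp [bar, PiLp.inner_apply, Fin.sum_univ_two, RCLike.inner_apply, conj_trivial]; ring

lemma norm_eq_one_of_sq {w : EuclideanSpace ℝ (Fin 3)} (h : ‖w‖^2 = 1) : ‖w‖ = 1 := by
  nlinarith [norm_nonneg w]

lemma sqle {x y : ℝ} (hx : 0 ≤ x) (hy : 0 ≤ y) (h : x^2 ≤ y^2) : x ≤ y := by
  nlinarith

lemma eqone {c : ℝ} (h0 : 0 < c) (h1 : c^2 = 1) : c = 1 := by nlinarith

lemma divpos {u X : ℝ} (hu : 0 < u) (h : 0 ≤ u * X) : 0 ≤ X :=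
  nonneg_of_mul_nonneg_right h hu

lemma lemB (a b s t sθ cθ n : ℝ) (ha : 0 ≤ a) (hn : 0 ≤ n) (hn2 : n^2 = a^2 + b^2)
    (hb : b < n * cθ) (hc : 0 < cθ) (hsθ : 0 ≤ sθ) (hpy : sθ^2 + cθ^2 = 1)
    (hs0 : 0 ≤ s) (hst : s^2 + t^2 = 1) (ht : cθ ≤ t) :
    a * s + b * t ≤ sθ * a + cθ * b := by
  have ht0 : 0 < t := lt_of_lt_of_le hc ht
  have h1 : b * s ≤ a * t := by
    rcases le_or_gt b 0 with h | h
    · have h2 : 0 ≤ a * t := mul_nonneg ha ht0.le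
      nlinarith
    · have hb2 : b^2 < n^2 * cθ^2 := by nlinarith
      have htc : cθ^2 ≤ t^2 := by nlinarith
      have hbt : b^2 ≤ n^2 * t^2 := by nlinarith [mul_le_mul_of_nonneg_left htc (sq_nonneg n)]
      have hbs : (b*s)^2 ≤ (a*t)^2 := by nlinarith [hbt, hst, sq_nonneg b, sq_nonneg (b*s), sq_nonneg (b*t)]
      exact sqle (mul_nonneg h.le hs0) (mul_nonneg ha ht0.le) hbs
  have h2 : b * sθ ≤ a * cθ := by
    rcases le_or_gt b 0 with h | h
    · nlinarith [mul_nonneg ha hc.le, mul_nonneg (neg_nonneg.mpr h) hsθ]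
    · have hb2 : b^2 < n^2 * cθ^2 := by nlinarith
      have hbs : (b*sθ)^2 ≤ (a*cθ)^2 := by nlinarith [hb2, hpy, sq_nonneg b, sq_nonneg (b*sθ), sq_nonneg (b*cθ)]
      exact sqle (mul_nonneg h.le hsθ) (mul_nonneg ha hc.le) hbs
  have h3 : 0 ≤ a*(t+cθ) - b*(sθ+s) := by nlinarith
  have h4 : 0 ≤ (t - cθ) * (a*(t+cθ) - b*(sθ+s)) := mul_nonneg (by linarith) h3
  rcases eq_or_lt_of_le (by positivity : (0:ℝ) ≤ sθ + s) with h | h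
  · have hsθ0 : sθ = 0 := by linarith
    have hs00 : s = 0 := by linarith
    have hc1 : cθ = 1 := eqone hc (by rw [hsθ0] at hpy; linarith)
    have ht1 : t = 1 := eqone ht0 (by rw [hs00] at hst; linarith)
    rw [hsθ0, hs00, hc1, ht1]; linarith
  · have h5 : (sθ + s) * (sθ * a + cθ * b - (a*s + b*t)) = (t - cθ) * (a*(t+cθ) - b*(sθ+s)) := by
      linear_combination a * hpy - a * hst
    have := divpos h (by rw [h5]; exact h4)
    linarith

/-- The supremum of `w ↦ ⟨p, w⟩` over `D` equals `‖p‖` if `p_z ≥ ‖p‖ cos θ`,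
and `sin θ ‖p̄‖ + cos θ p_z` otherwise. -/
theorem stmt3 (θ : ℝ) (hθ0 : 0 ≤ θ) (hθ1 : θ < Real.pi / 2)
    (p : EuclideanSpace ℝ (Fin 3)) :
    sSup ((fun d : EuclideanSpace ℝ (Fin 3) => ⟪p, d⟫) '' D θ) =
      if p 2 ≥ ‖p‖ * Real.cos θ then ‖p‖
      else Real.sin θ * ‖bar p‖ + Real.cos θ * p 2 := by
  have hpi : 0 < Real.pi := Real.pi_pos
  have hc : 0 < Real.cos θ := Real.cos_pos_of_mem_Ioo ⟨by linarith, hθ1⟩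
  have hsθ : 0 ≤ Real.sin θ := Real.sin_nonneg_of_nonneg_of_le_pi hθ0 (by linarith)
  have hpy : Real.sin θ ^ 2 + Real.cos θ ^ 2 = 1 := Real.sin_sq_add_cos_sq θ
  have hc1 : Real.cos θ ≤ 1 := Real.cos_le_one θ
  split_ifs with hcase
  · -- p 2 ≥ ‖p‖ cos θ : sup = ‖p‖
    apply IsGreatest.csSup_eq
    constructor
    · -- membership
      rcases eq_or_ne p 0 with rfl | hp
      · refine ⟨vec3 0 0 1, ⟨?_, ?_⟩, by simp⟩
        · apply norm_eq_one_of_sq; rw [normsq3]; simp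
        · simpa using hc1
      · have hn : (0:ℝ) < ‖p‖ := norm_pos_iff.mpr hp
        refine ⟨‖p‖⁻¹ • p, ⟨?_, ?_⟩, ?_⟩
        · rw [norm_smul]
          simp [abs_of_pos (inv_pos.mpr hn), inv_mul_cancel₀ hn.ne']
        · show Real.cos θ ≤ (‖p‖⁻¹ • p) 2
          have heq : (‖p‖⁻¹ • p) 2 = ‖p‖⁻¹ * p 2 := rfl
          have hinv : ‖p‖ * ‖p‖⁻¹ = 1 := mul_inv_cancel₀ hn.ne'
          rw [heq]
          have h2 : ‖p‖⁻¹ * (‖p‖ * Real.cos θ) ≤ ‖p‖⁻¹ * p 2 :=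
            mul_le_mul_of_nonneg_left (ge_iff_le.mp hcase) (inv_nonneg.mpr hn.le)
          have h3 : ‖p‖⁻¹ * (‖p‖ * Real.cos θ) = Real.cos θ := by field_simp
          linarith
        · show ⟪p, ‖p‖⁻¹ • p⟫ = ‖p‖
          rw [real_inner_smul_right, real_inner_self_eq_norm_sq, sq]
          field_simp
    · -- upper bound
      rintro x ⟨d, hd, rfl⟩
      calc ⟪p, d⟫ ≤ ‖p‖ * ‖d‖ := real_inner_le_norm p d
        _ = ‖p‖ := by rw [hd.1, mul_one]
  · -- p 2 < ‖p‖ cos θ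
    push_neg at hcase
    set a := ‖bar p‖ with ha_def
    have ha : 0 ≤ a := norm_nonneg _
    have ha2 : a^2 = p 0^2 + p 1^2 := normsq2 p
    have hn2 : ‖p‖^2 = a^2 + p 2^2 := by rw [normsq3, ha2]
    apply IsGreatest.csSup_eq
    constructor
    · -- membership: explicit maximizer
      rcases eq_or_lt_of_le ha with haz | hapos
      · -- a = 0, so p 0 = p 1 = 0
        have hp0 : p 0 = 0 := by nlinarith [sq_nonneg (p 0), sq_nonneg (p 1)]
        have hp1 : p 1 = 0 := by nlinarith [sq_nonneg (p 0), sq_nonneg (p 1)]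
        refine ⟨vec3 (Real.sin θ) 0 (Real.cos θ), ⟨?_, by simp⟩, ?_⟩
        · apply norm_eq_one_of_sq; rw [normsq3]; simpa using hpy
        · show ⟪p, _⟫ = _
          rw [inner3]; simp [hp0, hp1, ← haz, mul_comm]
      · refine ⟨vec3 (Real.sin θ * p 0 / a) (Real.sin θ * p 1 / a) (Real.cos θ), ⟨?_, by simp⟩, ?_⟩
        · apply norm_eq_one_of_sq; rw [normsq3]
          simp only [vec3_0, vec3_1, vec3_2]
          field_simp
          nlinarith [ha2, hpy]
        · show ⟪p, _⟫ = _
          rw [inner3]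
          simp only [vec3_0, vec3_1, vec3_2]
          field_simp
          nlinarith [ha2]
    · -- upper bound via lemB
      rintro x ⟨d, hd, rfl⟩
      have hdn : d 0^2 + d 1^2 + d 2^2 = 1 := by
        have := normsq3 d; rw [hd.1] at this; linarith [this.symm]
      have hs2 : ‖bar d‖^2 = d 0^2 + d 1^2 := normsq2 d
      have hst : ‖bar d‖^2 + (d 2)^2 = 1 := by rw [hs2]; linarith
      have hCS : p 0 * d 0 + p 1 * d 1 ≤ a * ‖bar d‖ := by
        rw [← inner2]; exact real_inner_le_norm _ _
      have hkey := lemB a (p 2) (‖bar d‖) (d 2) (Real.sin θ) (Real.cos θ) ‖p‖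
        ha (norm_nonneg p) hn2 hcase hc hsθ hpy (norm_nonneg _) hst hd.2
      calc ⟪p, d⟫ = p 0 * d 0 + p 1 * d 1 + p 2 * d 2 := inner3 p d
        _ ≤ a * ‖bar d‖ + p 2 * d 2 := by linarith
        _ ≤ Real.sin θ * a + Real.cos θ * p 2 := hkey
end

section
/- Let n ≥ 1, let q, p₀ ∈ ℝⁿ, let I ⊆ ℝ be an interval, and set p(t) = p₀ − t·q. Assume p(t) ≠ 0 for all t ∈ I. Then the function t ↦ ⟨q, p(t)/‖p(t)‖⟩ is nonincreasing on I; moreover, at any interior point t of I, its derivative vanishes if and only if q and p(t) are linearly dependent. -/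
open RealInnerProductSpace

lemma aux_deriv {E : Type*} [NormedAddCommGroup E] [InnerProductSpace ℝ E]
    (q p₀ : E) (t : ℝ) (hpt : p₀ - t • q ≠ 0) :
    HasDerivAt (fun s => ⟪q, ‖p₀ - s • q‖⁻¹ • (p₀ - s • q)⟫)
      ((⟪q, p₀ - t • q⟫ ^ 2 - ‖q‖ ^ 2 * ‖p₀ - t • q‖ ^ 2) / ‖p₀ - t • q‖ ^ 3) t := by
  have hn0 : ‖p₀ - t • q‖ ≠ 0 := norm_ne_zero_iff.2 hpt
  have hp : HasDerivAt (fun s : ℝ => p₀ - s • q) (-q) t := by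
    simpa using ((hasDerivAt_id t).smul_const q).const_sub p₀
  have hnum : HasDerivAt (fun s => ⟪q, p₀ - s • q⟫) (-‖q‖ ^ 2) t := by
    have := (hasDerivAt_const t q).inner ℝ hp
    simpa [inner_neg_right, real_inner_self_eq_norm_sq] using this
  have hinner : HasDerivAt (fun s => ⟪p₀ - s • q, p₀ - s • q⟫)
      (-(2 * ⟪q, p₀ - t • q⟫)) t := by
    have := hp.inner ℝ hp
    have h2 : ⟪p₀ - t • q, -q⟫ + ⟪-q, p₀ - t • q⟫ = -(2 * ⟪q, p₀ - t • q⟫) := by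
      rw [inner_neg_right, inner_neg_left, real_inner_comm]; ring
    rwa [h2] at this
  have hpos : (0:ℝ) < ⟪p₀ - t • q, p₀ - t • q⟫ := by
    rw [real_inner_self_eq_norm_mul_norm]
    exact mul_pos (norm_pos_iff.2 hpt) (norm_pos_iff.2 hpt)
  have hsqrt := (Real.hasDerivAt_sqrt hpos.ne').comp t hinner
  have hnorm : HasDerivAt (fun s => ‖p₀ - s • q‖) (-⟪q, p₀ - t • q⟫ / ‖p₀ - t • q‖) t := by
    have heq : (fun s : ℝ => Real.sqrt ⟪p₀ - s • q, p₀ - s • q⟫) = fun s => ‖p₀ - s • q‖ := by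
      funext s
      rw [real_inner_self_eq_norm_mul_norm, Real.sqrt_mul_self (norm_nonneg _)]
    simp only [Function.comp_def] at hsqrt
    rw [heq] at hsqrt
    refine hsqrt.congr_deriv ?_
    rw [real_inner_self_eq_norm_mul_norm, Real.sqrt_mul_self (norm_nonneg _)]
    field_simp
  have hdiv := hnum.div hnorm hn0
  have hfun : (fun s : ℝ => ⟪q, ‖p₀ - s • q‖⁻¹ • (p₀ - s • q)⟫)
      = fun s => ⟪q, p₀ - s • q⟫ / ‖p₀ - s • q‖ := by
    funext s
    rw [real_inner_smul_right, div_eq_inv_mul]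
  rw [hfun]
  refine hdiv.congr_deriv ?_
  field_simp
  ring

/-- For `p(t) = p₀ − t q` nonvanishing on an interval `I`, the function
`t ↦ ⟨q, p(t)/‖p(t)‖⟩` is nonincreasing on `I`; at interior points its derivative
vanishes iff `q` and `p(t)` are linearly dependent. -/
theorem stmt6 (n : ℕ) (hn : 1 ≤ n) (q p₀ : EuclideanSpace ℝ (Fin n))
    (I : Set ℝ) (hI : I.OrdConnected)
    (hp : ∀ t ∈ I, p₀ - t • q ≠ 0) :
    AntitoneOn (fun t => ⟪q, ‖p₀ - t • q‖⁻¹ • (p₀ - t • q)⟫) I ∧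
    ∀ t ∈ interior I, ∃ d' : ℝ,
      HasDerivAt (fun s => ⟪q, ‖p₀ - s • q‖⁻¹ • (p₀ - s • q)⟫) d' t ∧
      (d' = 0 ↔ ¬ LinearIndependent ℝ ![q, p₀ - t • q]) := by
  constructor
  · have hconv : Convex ℝ I := convex_iff_ordConnected.2 hI
    have hc : Continuous (fun t : ℝ => p₀ - t • q) :=
      continuous_const.sub (continuous_id.smul continuous_const)
    have hcont : ContinuousOn (fun t => ⟪q, ‖p₀ - t • q‖⁻¹ • (p₀ - t • q)⟫) I := by
      apply ContinuousOn.inner continuousOn_const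
      exact (hc.norm.continuousOn.inv₀ fun t ht => norm_ne_zero_iff.2 (hp t ht)).smul
        hc.continuousOn
    refine antitoneOn_of_deriv_nonpos hconv hcont (fun x hx =>
      (aux_deriv q p₀ x (hp x (interior_subset hx))).differentiableAt.differentiableWithinAt) ?_
    intro x hx
    have hPx := hp x (interior_subset hx)
    rw [(aux_deriv q p₀ x hPx).deriv]
    apply div_nonpos_of_nonpos_of_nonneg _ (by positivity)
    have h1 := abs_real_inner_le_norm q (p₀ - x • q)
    nlinarith [abs_nonneg ⟪q, p₀ - x • q⟫, sq_abs ⟪q, p₀ - x • q⟫, norm_nonneg q,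
      norm_nonneg (p₀ - x • q)]
  · intro t ht
    have hPt := hp t (interior_subset ht)
    refine ⟨_, aux_deriv q p₀ t hPt, ?_⟩
    set P := p₀ - t • q with hPdef
    have hnP : ‖P‖ ≠ 0 := norm_ne_zero_iff.2 hPt
    have h1 : (⟪q, P⟫ ^ 2 - ‖q‖ ^ 2 * ‖P‖ ^ 2) / ‖P‖ ^ 3 = 0 ↔
        ⟪q, P⟫ ^ 2 = ‖q‖ ^ 2 * ‖P‖ ^ 2 := by
      rw [div_eq_zero_iff, sub_eq_zero]
      simp [hnP]
    have h2 : ⟪q, P⟫ ^ 2 = ‖q‖ ^ 2 * ‖P‖ ^ 2 ↔ |⟪q, P⟫| = ‖q‖ * ‖P‖ := by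
      rw [← mul_pow, sq_eq_sq_iff_abs_eq_abs,
        abs_of_nonneg (mul_nonneg (norm_nonneg q) (norm_nonneg P))]
    have h3 : |⟪q, P⟫| = ‖q‖ * ‖P‖ ↔ (P = 0 ∨ ∃ r : ℝ, q = r • P) := by
      have tf := (norm_inner_eq_norm_tfae (𝕜 := ℝ) P q).out 0 2
      rw [Real.norm_eq_abs, real_inner_comm, mul_comm] at tf
      exact tf
    have h4 : ¬ LinearIndependent ℝ ![q, P] ↔ (P = 0 ∨ ∃ r : ℝ, q = r • P) := by
      rw [linearIndependent_fin2]
      simp only [Matrix.cons_val_one, Matrix.head_cons, Matrix.cons_val_zero,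
        not_and_or, not_forall, not_not]
      constructor
      · intro h
        rcases h with h | ⟨a, ha⟩
        · exact Or.inl h
        · exact Or.inr ⟨a, ha.symm⟩
      · rintro (h | ⟨r, hr⟩)
        · exact Or.inl h
        · exact Or.inr ⟨r, hr.symm⟩
    rw [h1, h2, h3]
    exact h4.symm
end

section
/- Let t_f > 0 and let Ψ : [0,t_f] → ℝ be absolutely continuous, i.e., Ψ(t) = Ψ(0) + ∫₀ᵗ ψ(s) ds for an integrable ψ. Assume there are functions c, g : [0,t_f] → ℝ with c(s) > 0 for all s, g nonincreasing, and ψ(s) = −c(s)·g(s) for almost every s. Then the sublevel set {t ∈ [0,t_f] : Ψ(t) ≤ 0} is order-connected: whenever 0 ≤ s ≤ t ≤ u ≤ t_f with Ψ(s) ≤ 0 and Ψ(u) ≤ 0, one has Ψ(t) ≤ 0. Equivalently, there exist 0 ≤ t₁ ≤ t₂ ≤ t_f such that Ψ(t) > 0 for all t ∈ [0,t₁) ∪ (t₂,t_f] and Ψ(t) ≤ 0 for all t ∈ (t₁,t₂). -/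
open MeasureTheory

/-- Sign-structure lemma for the switching function: if `Ψ` is absolutely continuous with
`Ψ' = −c·g` a.e. where `c > 0` and `g` is nonincreasing, then `{Ψ ≤ 0}` is order-connected;
equivalently, `Ψ > 0` outside a subinterval `[t₁, t₂]` on whose interior `Ψ ≤ 0`. -/
theorem stmt10 (t_f : ℝ) (htf : 0 < t_f) (Ψ ψ c g : ℝ → ℝ)
    (hψint : IntervalIntegrable ψ volume 0 t_f)
    (hΨ : ∀ t ∈ Set.Icc (0:ℝ) t_f, Ψ t = Ψ 0 + ∫ s in (0:ℝ)..t, ψ s)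
    (hc : ∀ s ∈ Set.Icc (0:ℝ) t_f, 0 < c s)
    (hg : AntitoneOn g (Set.Icc (0:ℝ) t_f))
    (hψ : ∀ᵐ s ∂volume, s ∈ Set.Icc (0:ℝ) t_f → ψ s = -(c s * g s)) :
    (∀ s t u : ℝ, 0 ≤ s → s ≤ t → t ≤ u → u ≤ t_f → Ψ s ≤ 0 → Ψ u ≤ 0 → Ψ t ≤ 0) ∧
    ∃ t₁ t₂ : ℝ, 0 ≤ t₁ ∧ t₁ ≤ t₂ ∧ t₂ ≤ t_f ∧
      (∀ t, (0 ≤ t ∧ t < t₁) ∨ (t₂ < t ∧ t ≤ t_f) → 0 < Ψ t) ∧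
      (∀ t, t₁ < t → t < t₂ → Ψ t ≤ 0) := by
  have key : ∀ s t u : ℝ, 0 ≤ s → s ≤ t → t ≤ u → u ≤ t_f →
      Ψ s ≤ 0 → Ψ u ≤ 0 → Ψ t ≤ 0 := by
    intro s t u hs hst htu hu hΨs hΨu
    by_contra hpos
    push_neg at hpos
    have hsm : s ∈ Set.Icc (0:ℝ) t_f := ⟨hs, hst.trans (htu.trans hu)⟩
    have htm : t ∈ Set.Icc (0:ℝ) t_f := ⟨hs.trans hst, htu.trans hu⟩
    have hum : u ∈ Set.Icc (0:ℝ) t_f := ⟨hs.trans (hst.trans htu), hu⟩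
    have hsub : ∀ a b : ℝ, a ∈ Set.Icc (0:ℝ) t_f → b ∈ Set.Icc (0:ℝ) t_f →
        IntervalIntegrable ψ volume a b := by
      intro a b ha hb
      exact hψint.mono_set (Set.uIcc_subset_uIcc
        (by rwa [Set.uIcc_of_le htf.le]) (by rwa [Set.uIcc_of_le htf.le]))
    -- Ψ t - Ψ s = ∫ s..t ψ
    have hdiff : ∀ a b : ℝ, a ∈ Set.Icc (0:ℝ) t_f → b ∈ Set.Icc (0:ℝ) t_f →
        Ψ b - Ψ a = ∫ x in a..b, ψ x := by
      intro a b ha hb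
      rw [hΨ a ha, hΨ b hb]
      have := intervalIntegral.integral_interval_sub_left
        (hsub 0 b (Set.left_mem_Icc.2 htf.le) hb)
        (hsub 0 a (Set.left_mem_Icc.2 htf.le) ha)
      rw [← this]; ring
    have hst_int : 0 < ∫ x in s..t, ψ x := by
      rw [← hdiff s t hsm htm]; linarith
    -- there is a point r ∈ [s,t] with g r < 0
    have hr : ∃ r ∈ Set.Icc s t, g r < 0 := by
      by_contra h
      push_neg at h
      have hae : ∀ᵐ x ∂(volume.restrict (Set.Icc s t)), 0 ≤ (fun y => -ψ y) x := by
        have h1 : ∀ᵐ x ∂(volume.restrict (Set.Icc s t)),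
            x ∈ Set.Icc (0:ℝ) t_f → ψ x = -(c x * g x) := ae_restrict_of_ae hψ
        have h2 : ∀ᵐ x ∂(volume.restrict (Set.Icc s t)), x ∈ Set.Icc s t :=
          ae_restrict_mem measurableSet_Icc
        filter_upwards [h1, h2] with x h1x h2x
        have hx : x ∈ Set.Icc (0:ℝ) t_f := ⟨hsm.1.trans h2x.1, h2x.2.trans htm.2⟩
        have := h1x hx
        have hcx := hc x hx
        have hgx := h x h2x
        simp only [this]
        nlinarith
      have : 0 ≤ ∫ x in s..t, -ψ x :=
        intervalIntegral.integral_nonneg_of_ae_restrict hst hae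
      rw [intervalIntegral.integral_neg] at this
      linarith
    obtain ⟨r, hrm, hgr⟩ := hr
    have hrm' : r ∈ Set.Icc (0:ℝ) t_f := ⟨hsm.1.trans hrm.1, hrm.2.trans htm.2⟩
    -- ψ ≥ 0 a.e. on [t,u]
    have hae2 : ∀ᵐ x ∂(volume.restrict (Set.Icc t u)), 0 ≤ ψ x := by
      have h1 : ∀ᵐ x ∂(volume.restrict (Set.Icc t u)),
          x ∈ Set.Icc (0:ℝ) t_f → ψ x = -(c x * g x) := ae_restrict_of_ae hψ
      have h2 : ∀ᵐ x ∂(volume.restrict (Set.Icc t u)), x ∈ Set.Icc t u :=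
        ae_restrict_mem measurableSet_Icc
      filter_upwards [h1, h2] with x h1x h2x
      have hx : x ∈ Set.Icc (0:ℝ) t_f := ⟨htm.1.trans h2x.1, h2x.2.trans hum.2⟩
      have hgx : g x ≤ g r := hg hrm' hx (hrm.2.trans h2x.1)
      have hcx := hc x hx
      rw [h1x hx]
      nlinarith
    have hint2 : 0 ≤ ∫ x in t..u, ψ x :=
      intervalIntegral.integral_nonneg_of_ae_restrict htu hae2
    have := hdiff t u htm hum
    linarith
  refine ⟨key, ?_⟩
  by_cases hne : ∃ x ∈ Set.Icc (0:ℝ) t_f, Ψ x ≤ 0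
  · set S : Set ℝ := {x | x ∈ Set.Icc (0:ℝ) t_f ∧ Ψ x ≤ 0} with hS
    have hSne : S.Nonempty := by
      obtain ⟨x, hx, hx'⟩ := hne; exact ⟨x, hx, hx'⟩
    have hbddb : BddBelow S := ⟨0, fun x hx => hx.1.1⟩
    have hbdda : BddAbove S := ⟨t_f, fun x hx => hx.1.2⟩
    refine ⟨sInf S, sSup S, le_csInf hSne (fun x hx => hx.1.1),
      csInf_le_csSup hSne hbddb hbdda, csSup_le hSne (fun x hx => hx.1.2), ?_, ?_⟩
    · have hi0 : 0 ≤ sInf S := le_csInf hSne (fun x hx => hx.1.1)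
      have his : sInf S ≤ sSup S := csInf_le_csSup hSne hbddb hbdda
      have hstf : sSup S ≤ t_f := csSup_le hSne (fun x hx => hx.1.2)
      rintro t (⟨ht0, htlt⟩ | ⟨htgt, httf⟩)
      · by_contra h
        push_neg at h
        have : t ∈ S := ⟨⟨ht0, htlt.le.trans (his.trans hstf)⟩, h⟩
        exact absurd (csInf_le hbddb this) (not_le.2 htlt)
      · by_contra h
        push_neg at h
        have : t ∈ S := ⟨⟨(hi0.trans his).trans htgt.le, httf⟩, h⟩
        exact absurd (le_csSup hbdda this) (not_le.2 htgt)
    · intro t h1 h2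
      obtain ⟨a, haS, hat⟩ := exists_lt_of_csInf_lt hSne h1
      obtain ⟨b, hbS, htb⟩ := exists_lt_of_lt_csSup hSne h2
      exact key a t b haS.1.1 hat.le htb.le hbS.1.2 haS.2 hbS.2
  · push_neg at hne
    refine ⟨0, 0, le_rfl, le_rfl, htf.le, ?_, ?_⟩
    · rintro t (⟨ht0, htlt⟩ | ⟨htgt, httf⟩)
      · exact absurd htlt (not_lt.2 ht0)
      · exact hne t ⟨htgt.le, httf⟩
    · intro t h1 h2; exact absurd (h1.trans h2) (lt_irrefl 0)
end

section
/- Let t_f > 0 and let Ψ : [0,t_f] → ℝ be absolutely continuous, i.e., Ψ(t) = Ψ(0) + ∫₀ᵗ ψ(s) ds for an integrable ψ. Assume there are functions K, f, m : [0,t_f] → ℝ with K integrable, m(s) > 0 for all s, f nondecreasing, and ψ(s) = K(s)·Ψ(s) + f(s)/m(s) for almost every s. Then the sublevel set {t ∈ [0,t_f] : Ψ(t) ≤ 0} is order-connected: whenever 0 ≤ s ≤ t ≤ u ≤ t_f with Ψ(s) ≤ 0 and Ψ(u) ≤ 0, one has Ψ(t) ≤ 0. Equivalently, there exist 0 ≤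 t₁ ≤ t₂ ≤ t_f such that Ψ(t) > 0 for all t ∈ [0,t₁) ∪ (t₂,t_f] and Ψ(t) ≤ 0 for all t ∈ (t₁,t₂). -/
open MeasureTheory

open Set

private lemma my_gronwall (a d : ℝ) (had : a ≤ d) (g Ψ : ℝ → ℝ)
    (hg : IntervalIntegrable g volume a d) (hg0 : ∀ σ, 0 ≤ g σ)
    (hΨc : ContinuousOn Ψ (Icc a d))
    (hle : ∀ r ∈ Icc a d, Ψ r ≤ ∫ σ in a..r, g σ * Ψ σ) :
    ∀ r ∈ Icc a d, Ψ r ≤ 0 := by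
  have hsub : ∀ {x y : ℝ}, a ≤ x → x ≤ y → y ≤ d → uIcc x y ⊆ uIcc a d := by
    intro x y h1 h2 h3
    rw [uIcc_of_le h2, uIcc_of_le had]
    exact Icc_subset_Icc h1 h3
  have hgΨ : IntervalIntegrable (fun σ => g σ * Ψ σ) volume a d :=
    hg.mul_continuousOn (by rwa [uIcc_of_le had])
  set S : Set ℝ := {x | x ∈ Icc a d ∧ ∀ r ∈ Icc a x, Ψ r ≤ 0} with hS
  have haS : a ∈ S := by
    refine ⟨⟨le_rfl, had⟩, fun r hr => ?_⟩
    have : r = a := le_antisymm hr.2 hr.1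
    subst this
    simpa using hle r ⟨le_rfl, had⟩
  have hSne : S.Nonempty := ⟨a, haS⟩
  have hSbdd : BddAbove S := ⟨d, fun x hx => hx.1.2⟩
  set c := sSup S with hc
  have hcmem : c ∈ Icc a d := ⟨le_csSup hSbdd haS, csSup_le hSne fun x hx => hx.1.2⟩
  have key1 : ∀ r ∈ Ico a c, Ψ r ≤ 0 := by
    intro r hr
    obtain ⟨x, hxS, hrx⟩ := exists_lt_of_lt_csSup hSne hr.2
    exact hxS.2 r ⟨hr.1, hrx.le⟩
  have hΨc0 : Ψ c ≤ 0 := by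
    rcases eq_or_lt_of_le hcmem.1 with h | h
    · exact h ▸ haS.2 a ⟨le_rfl, le_rfl⟩
    · have hclosed : IsClosed (Icc a c ∩ Ψ ⁻¹' Iic 0) :=
        (hΨc.mono (Icc_subset_Icc_right hcmem.2)).preimage_isClosed_of_isClosed
          isClosed_Icc isClosed_Iic
      have hsub2 : Ico a c ⊆ Icc a c ∩ Ψ ⁻¹' Iic 0 := fun r hr =>
        ⟨⟨hr.1, hr.2.le⟩, key1 r hr⟩
      have : c ∈ Icc a c ∩ Ψ ⁻¹' Iic 0 := by
        have h1 : c ∈ closure (Ico a c) := by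
          rw [closure_Ico h.ne]; exact ⟨hcmem.1, le_rfl⟩
        exact hclosed.closure_eq ▸ (closure_mono hsub2 h1)
      exact this.2
  have keyc : ∀ r ∈ Icc a c, Ψ r ≤ 0 := by
    intro r hr
    rcases eq_or_lt_of_le hr.2 with h | h
    · exact h ▸ hΨc0
    · exact key1 r ⟨hr.1, h⟩
  have hcd : c = d := by
    by_contra hne
    have hcd : c < d := lt_of_le_of_ne hcmem.2 hne
    -- find d' ∈ (c, d] with ∫_c^r g < 1/2 for all r ∈ [c, d']
    have hGc : ContinuousOn (fun x => ∫ σ in c..x, g σ) (Icc a d) := by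
      have := intervalIntegral.continuousOn_primitive_interval'
        hg (by rw [uIcc_of_le had]; exact hcmem)
      rwa [uIcc_of_le had] at this
    have htend : Filter.Tendsto (fun x => ∫ σ in c..x, g σ) (nhdsWithin c (Icc a d))
        (nhds 0) := by
      have := (hGc c hcmem)
      rwa [ContinuousWithinAt, intervalIntegral.integral_same] at this
    have hev : ∀ᶠ x in nhdsWithin c (Icc a d), (∫ σ in c..x, g σ) < 1/2 :=
      htend.eventually_lt_const (by norm_num)
    rw [Filter.eventually_iff, Metric.mem_nhdsWithin_iff] at hev
    obtain ⟨ε, hε, hball⟩ := hev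
    set d' := min d (c + ε/2) with hd'
    have hcd' : c < d' := lt_min hcd (by linarith)
    have hd'd : d' ≤ d := min_le_left _ _
    have hGlt : ∀ r ∈ Icc c d', (∫ σ in c..r, g σ) < 1/2 := by
      intro r hr
      have hrle : r ≤ c + ε/2 := le_trans hr.2 (min_le_right _ _)
      have hb1 : r ∈ Metric.ball c ε := by
        rw [Metric.mem_ball, Real.dist_eq, abs_lt]
        constructor
        · linarith [hr.1]
        · linarith
      exact hball ⟨hb1, ⟨le_trans hcmem.1 hr.1, le_trans hr.2 hd'd⟩⟩
    obtain ⟨r₀, hr₀mem, hr₀max⟩ := isCompact_Icc.exists_isMaxOn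
      (nonempty_Icc.2 hcd'.le) (hΨc.mono (Icc_subset_Icc hcmem.1 hd'd))
    by_cases hM : Ψ r₀ ≤ 0
    · have hd'S : d' ∈ S := by
        refine ⟨⟨le_trans hcmem.1 hcd'.le, hd'd⟩, fun r hr => ?_⟩
        rcases le_or_gt r c with h | h
        · exact keyc r ⟨hr.1, h⟩
        · exact le_trans (hr₀max ⟨h.le, hr.2⟩) hM
      exact absurd (le_csSup hSbdd hd'S) (not_le.2 hcd')
    · push_neg at hM
      have h1 : IntervalIntegrable (fun σ => g σ * Ψ σ) volume a c :=
        hgΨ.mono_set (hsub le_rfl hcmem.1 hcmem.2)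
      have h2 : IntervalIntegrable (fun σ => g σ * Ψ σ) volume c r₀ :=
        hgΨ.mono_set (hsub hcmem.1 hr₀mem.1 (le_trans hr₀mem.2 hd'd))
      have hsplit : (∫ σ in a..r₀, g σ * Ψ σ)
          = (∫ σ in a..c, g σ * Ψ σ) + ∫ σ in c..r₀, g σ * Ψ σ :=
        (intervalIntegral.integral_add_adjacent_intervals h1 h2).symm
      have hI1 : (∫ σ in a..c, g σ * Ψ σ) ≤ 0 := by
        have := intervalIntegral.integral_mono_on hcmem.1 h1
          (intervalIntegrable_const (c := (0:ℝ)))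
          (fun x hx => mul_nonpos_of_nonneg_of_nonpos (hg0 x) (keyc x hx))
        simpa using this
      have hI2 : (∫ σ in c..r₀, g σ * Ψ σ) ≤ (∫ σ in c..r₀, g σ) * Ψ r₀ := by
        rw [← intervalIntegral.integral_mul_const]
        exact intervalIntegral.integral_mono_on hr₀mem.1 h2
          ((hg.mono_set (hsub hcmem.1 hr₀mem.1 (le_trans hr₀mem.2 hd'd))).mul_const _)
          (fun x hx => mul_le_mul_of_nonneg_left
            (hr₀max ⟨hx.1, le_trans hx.2 hr₀mem.2⟩) (hg0 x))
      have hI3 : (∫ σ in c..r₀, g σ) * Ψ r₀ ≤ (1/2) * Ψ r₀ :=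
        mul_le_mul_of_nonneg_right (hGlt r₀ hr₀mem).le hM.le
      have hfinal := hle r₀ ⟨le_trans hcmem.1 hr₀mem.1, le_trans hr₀mem.2 (le_trans hd'd le_rfl)⟩
      linarith
  intro r hr
  exact keyc r ⟨hr.1, hcd ▸ hr.2⟩

private lemma my_gronwall_bwd (e b : ℝ) (heb : e ≤ b) (g Ψ : ℝ → ℝ)
    (hg : IntervalIntegrable g volume e b) (hg0 : ∀ σ, 0 ≤ g σ)
    (hΨc : ContinuousOn Ψ (Icc e b))
    (hle : ∀ r ∈ Icc e b, Ψ r ≤ ∫ σ in r..b, g σ * Ψ σ) :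
    ∀ r ∈ Icc e b, Ψ r ≤ 0 := by
  set c := e + b with hcdef
  have hg' : IntervalIntegrable (fun x => g (c - x)) volume e b := by
    have := (hg.comp_sub_left c).symm
    simpa [hcdef] using this
  have hmaps : ∀ x ∈ Icc e b, c - x ∈ Icc e b := by
    intro x hx
    exact ⟨by simp only [hcdef]; linarith [hx.2], by simp only [hcdef]; linarith [hx.1]⟩
  have hΨc' : ContinuousOn (fun x => Ψ (c - x)) (Icc e b) :=
    hΨc.comp ((continuous_const.sub continuous_id).continuousOn) hmaps
  have hle' : ∀ r ∈ Icc e b, Ψ (c - r) ≤ ∫ σ in e..r, g (c - σ) * Ψ (c - σ) := by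
    intro r hr
    have hint : (∫ σ in e..r, (fun y => g y * Ψ y) (c - σ))
        = ∫ σ in (c - r)..(c - e), g σ * Ψ σ :=
      intervalIntegral.integral_comp_sub_left (fun y => g y * Ψ y) c
    have hce : c - e = b := by simp [hcdef]
    rw [show (fun σ => g (c - σ) * Ψ (c - σ)) = fun σ => (fun y => g y * Ψ y) (c - σ) from rfl]
    rw [hint, hce]
    exact hle (c - r) (hmaps r hr)
  have H := my_gronwall e b heb (fun x => g (c - x)) (fun x => Ψ (c - x))
    hg' (fun σ => hg0 _) hΨc' hle'
  intro r hr
  have := H (c - r) (hmaps r hr)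
  simpa [hcdef, show c - (c - r) = r by ring] using this

/-- Sign-structure lemma for the switching function with constant atmospheric pressure:
if `Ψ` is absolutely continuous with `Ψ' = K·Ψ + f/m` a.e. where `K` is integrable,
`m > 0` and `f` is nondecreasing, then `{Ψ ≤ 0}` is order-connected; equivalently,
`Ψ > 0` outside a subinterval `[t₁, t₂]` on whose interior `Ψ ≤ 0`. -/
theorem stmt11 (t_f : ℝ) (htf : 0 < t_f) (Ψ ψ K f m : ℝ → ℝ)
    (hψint : IntervalIntegrable ψ volume 0 t_f)
    (hΨ : ∀ t ∈ Set.Icc (0:ℝ) t_f, Ψ t = Ψ 0 + ∫ s in (0:ℝ)..t, ψ s)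
    (hK : IntervalIntegrable K volume 0 t_f)
    (hm : ∀ s ∈ Set.Icc (0:ℝ) t_f, 0 < m s)
    (hf : MonotoneOn f (Set.Icc (0:ℝ) t_f))
    (hψ : ∀ᵐ s ∂volume, s ∈ Set.Icc (0:ℝ) t_f → ψ s = K s * Ψ s + f s / m s) :
    (∀ s t u : ℝ, 0 ≤ s → s ≤ t → t ≤ u → u ≤ t_f → Ψ s ≤ 0 → Ψ u ≤ 0 → Ψ t ≤ 0) ∧
    ∃ t₁ t₂ : ℝ, 0 ≤ t₁ ∧ t₁ ≤ t₂ ∧ t₂ ≤ t_f ∧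
      (∀ t, (0 ≤ t ∧ t < t₁) ∨ (t₂ < t ∧ t ≤ t_f) → 0 < Ψ t) ∧
      (∀ t, t₁ < t → t < t₂ → Ψ t ≤ 0) := by
  have hsub : ∀ {x y : ℝ}, 0 ≤ x → x ≤ y → y ≤ t_f → uIcc x y ⊆ uIcc 0 t_f := by
    intro x y h1 h2 h3
    rw [uIcc_of_le h2, uIcc_of_le htf.le]
    exact Icc_subset_Icc h1 h3
  have hΨcont : ContinuousOn Ψ (Icc 0 t_f) := by
    have h1 : ContinuousOn (fun x => Ψ 0 + ∫ s in (0:ℝ)..x, ψ s) (Icc 0 t_f) := by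
      have := intervalIntegral.continuousOn_primitive_interval' hψint
        (by rw [uIcc_of_le htf.le]; exact ⟨le_rfl, htf.le⟩)
      rw [uIcc_of_le htf.le] at this
      exact continuousOn_const.add this
    exact h1.congr hΨ
  have hΨdiff : ∀ x y : ℝ, 0 ≤ x → x ≤ y → y ≤ t_f → Ψ y - Ψ x = ∫ σ in x..y, ψ σ := by
    intro x y hx hxy hy
    rw [hΨ y ⟨le_trans hx hxy, hy⟩, hΨ x ⟨hx, le_trans hxy hy⟩]
    have := intervalIntegral.integral_interval_sub_left
      (hψint.mono_set (hsub (le_refl 0) (le_trans hx hxy) hy))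
      (hψint.mono_set (hsub (le_refl 0) hx (le_trans hxy hy)))
    linarith
  have part1 : ∀ s t u : ℝ, 0 ≤ s → s ≤ t → t ≤ u → u ≤ t_f → Ψ s ≤ 0 → Ψ u ≤ 0 → Ψ t ≤ 0 := by
    intro s t u hs hst htu hu hΨs hΨu
    by_contra hΨt
    push_neg at hΨt
    have ht0 : (0:ℝ) ≤ t := le_trans hs hst
    have httf : t ≤ t_f := le_trans htu hu
    -- a = last zero before t, b = first zero after t
    set A : Set ℝ := Icc s t ∩ Ψ ⁻¹' Iic 0 with hA
    have hAcl : IsClosed A :=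
      (hΨcont.mono (Icc_subset_Icc hs httf)).preimage_isClosed_of_isClosed
        isClosed_Icc isClosed_Iic
    have hAcomp : IsCompact A := isCompact_Icc.of_isClosed_subset hAcl inter_subset_left
    have hAne : A.Nonempty := ⟨s, ⟨le_rfl, hst⟩, hΨs⟩
    set a := sSup A with ha
    have haA : a ∈ A := hAcomp.sSup_mem hAne
    have has : s ≤ a := haA.1.1
    have hat : a < t := lt_of_le_of_ne haA.1.2 (fun h => absurd (h ▸ haA.2) (not_le.2 hΨt))
    have h0a : (0:ℝ) ≤ a := le_trans hs has
    have hΨa : Ψ a ≤ 0 := haA.2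
    set B : Set ℝ := Icc t u ∩ Ψ ⁻¹' Iic 0 with hB
    have hBcl : IsClosed B :=
      (hΨcont.mono (Icc_subset_Icc ht0 hu)).preimage_isClosed_of_isClosed
        isClosed_Icc isClosed_Iic
    have hBcomp : IsCompact B := isCompact_Icc.of_isClosed_subset hBcl inter_subset_left
    have hBne : B.Nonempty := ⟨u, ⟨htu, le_rfl⟩, hΨu⟩
    set b := sInf B with hb
    have hbB : b ∈ B := hBcomp.sInf_mem hBne
    have hbu : b ≤ u := hbB.1.2
    have htb : t < b := lt_of_le_of_ne hbB.1.1 (fun h => absurd (h ▸ hbB.2) (not_le.2 hΨt))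
    have hbtf : b ≤ t_f := le_trans hbu hu
    have hab : a < b := lt_trans hat htb
    have hpos : ∀ r ∈ Ioo a b, 0 < Ψ r := by
      intro r hr
      by_contra hcon
      push_neg at hcon
      rcases le_total r t with h | h
      · have hrA : r ∈ A := ⟨⟨le_trans has hr.1.le, h⟩, hcon⟩
        exact absurd (le_csSup hAcomp.bddAbove hrA) (not_le.2 hr.1)
      · have hrB : r ∈ B := ⟨⟨h, le_trans hr.2.le hbu⟩, hcon⟩
        exact absurd (csInf_le hBcomp.bddBelow hrB) (not_le.2 hr.2)
    have hane : ∀ᵐ σ : ℝ ∂volume, σ ≠ a := by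
      rw [MeasureTheory.ae_iff]
      simpa using measure_singleton (a : ℝ)
    have hbne : ∀ᵐ σ : ℝ ∂volume, σ ≠ b := by
      rw [MeasureTheory.ae_iff]
      simpa using measure_singleton (b : ℝ)
    by_cases hcase : ∀ x ∈ Ico a b, f x ≤ 0
    · -- forward case: f ≤ 0 on [a, b)
      set d := (a + b) / 2 with hd
      have had : a < d := by simp only [hd]; linarith
      have hdb : d < b := by simp only [hd]; linarith
      have hdtf : d ≤ t_f := le_trans hdb.le hbtf
      set g : ℝ → ℝ := fun σ => (K σ + |K σ|) / 2 with hg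
      have hgint : IntervalIntegrable g volume a d := by
        have h1 := hK.mono_set (hsub h0a had.le hdtf)
        exact (h1.add h1.abs).div_const 2
      have hg0 : ∀ σ, 0 ≤ g σ := fun σ => by
        have := neg_abs_le (K σ)
        simp only [hg]
        linarith
      have hle : ∀ r ∈ Icc a d, Ψ r ≤ ∫ σ in a..r, g σ * Ψ σ := by
        intro r hr
        have hrtf : r ≤ t_f := le_trans hr.2 hdtf
        have heq : Ψ r - Ψ a = ∫ σ in a..r, ψ σ := hΨdiff a r h0a hr.1 hrtf
        have hmono : (∫ σ in a..r, ψ σ) ≤ ∫ σ in a..r, g σ * Ψ σ := by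
          apply intervalIntegral.integral_mono_ae_restrict hr.1
            (hψint.mono_set (hsub h0a hr.1 hrtf))
            ((hgint.mono_set (by rw [uIcc_of_le hr.1, uIcc_of_le (le_trans hr.1 hr.2)]; exact Icc_subset_Icc le_rfl hr.2)).mul_continuousOn
              (hΨcont.mono (by rw [uIcc_of_le hr.1]; exact Icc_subset_Icc h0a hrtf)))
          rw [Filter.EventuallyLE, MeasureTheory.ae_restrict_iff' measurableSet_Icc]
          filter_upwards [hψ, hane] with σ hσψ hσa hσmem
          have hσtf : σ ∈ Icc (0:ℝ) t_f := ⟨le_trans h0a hσmem.1, le_trans hσmem.2 hrtf⟩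
          rw [hσψ hσtf]
          have hfσ : f σ ≤ 0 := hcase σ ⟨hσmem.1, lt_of_le_of_lt (le_trans hσmem.2 hr.2) hdb⟩
          have hfm : f σ / m σ ≤ 0 := div_nonpos_of_nonpos_of_nonneg hfσ (hm σ hσtf).le
          have hΨσ : 0 < Ψ σ := hpos σ ⟨lt_of_le_of_ne hσmem.1 (Ne.symm hσa),
            lt_of_le_of_lt (le_trans hσmem.2 hr.2) hdb⟩
          have hKg : K σ ≤ g σ := by
            have := le_abs_self (K σ)
            simp only [hg]
            linarith
          nlinarith [mul_le_mul_of_nonneg_right hKg hΨσ.le]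
        linarith
      have hz := my_gronwall a d had.le g Ψ hgint hg0
        (hΨcont.mono (Icc_subset_Icc h0a hdtf)) hle ((a + d) / 2)
        ⟨by linarith, by linarith⟩
      have hp := hpos ((a + d) / 2) ⟨by linarith, by simp only [hd]; linarith⟩
      linarith
    · -- backward case: f > 0 from some e ∈ [a, b)
      push_neg at hcase
      obtain ⟨e, he, hfe⟩ := hcase
      have h0e : (0:ℝ) ≤ e := le_trans h0a he.1
      have heb : e < b := he.2
      have hetf : e ∈ Icc (0:ℝ) t_f := ⟨h0e, le_trans heb.le hbtf⟩
      set g : ℝ → ℝ := fun σ => (|K σ| - K σ) / 2 with hg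
      have hgint : IntervalIntegrable g volume e b := by
        have h1 := hK.mono_set (hsub h0e heb.le hbtf)
        exact (h1.abs.sub h1).div_const 2
      have hg0 : ∀ σ, 0 ≤ g σ := fun σ => by
        have := le_abs_self (K σ)
        simp only [hg]
        linarith
      have hle : ∀ r ∈ Icc e b, Ψ r ≤ ∫ σ in r..b, g σ * Ψ σ := by
        intro r hr
        have hr0 : (0:ℝ) ≤ r := le_trans h0e hr.1
        have heq : Ψ b - Ψ r = ∫ σ in r..b, ψ σ := hΨdiff r b hr0 hr.2 hbtf
        have hnegint : (∫ σ in r..b, -ψ σ) = -∫ σ in r..b, ψ σ :=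
          intervalIntegral.integral_neg
        have hmono : (∫ σ in r..b, -ψ σ) ≤ ∫ σ in r..b, g σ * Ψ σ := by
          apply intervalIntegral.integral_mono_ae_restrict hr.2
            ((hψint.mono_set (hsub hr0 hr.2 hbtf)).neg)
            ((hgint.mono_set (by rw [uIcc_of_le hr.2, uIcc_of_le heb.le]; exact Icc_subset_Icc hr.1 le_rfl)).mul_continuousOn
              (hΨcont.mono (by rw [uIcc_of_le hr.2]; exact Icc_subset_Icc hr0 hbtf)))
          rw [Filter.EventuallyLE, MeasureTheory.ae_restrict_iff' measurableSet_Icc]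
          filter_upwards [hψ, hane, hbne] with σ hσψ hσa hσb hσmem
          have hσtf : σ ∈ Icc (0:ℝ) t_f := ⟨le_trans hr0 hσmem.1, le_trans hσmem.2 hbtf⟩
          simp only [Pi.neg_apply]
          rw [hσψ hσtf]
          have hfσ : 0 < f σ := lt_of_lt_of_le hfe (hf hetf hσtf (le_trans hr.1 hσmem.1))
          have hfm : 0 ≤ f σ / m σ := div_nonneg hfσ.le (hm σ hσtf).le
          have hΨσ : 0 < Ψ σ := hpos σ
            ⟨lt_of_le_of_ne (le_trans he.1 (le_trans hr.1 hσmem.1)) (Ne.symm hσa),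
             lt_of_le_of_ne hσmem.2 hσb⟩
          have hKg : -K σ ≤ g σ := by
            have := neg_abs_le (K σ)
            simp only [hg]
            linarith
          nlinarith [mul_le_mul_of_nonneg_right hKg hΨσ.le]
        have hΨb : Ψ b ≤ 0 := hbB.2
        linarith
      have hz := my_gronwall_bwd e b heb.le g Ψ hgint hg0
        (hΨcont.mono (Icc_subset_Icc h0e hbtf)) hle ((e + b) / 2)
        ⟨by linarith, by linarith⟩
      have hp := hpos ((e + b) / 2) ⟨by linarith [he.1], by linarith⟩
      linarith
  refine ⟨part1, ?_⟩
  by_cases hS : (Icc (0:ℝ) t_f ∩ Ψ ⁻¹' Iic 0).Nonempty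
  · set S : Set ℝ := Icc (0:ℝ) t_f ∩ Ψ ⁻¹' Iic 0 with hSdef
    have hScl : IsClosed S :=
      hΨcont.preimage_isClosed_of_isClosed isClosed_Icc isClosed_Iic
    have hScomp : IsCompact S := isCompact_Icc.of_isClosed_subset hScl inter_subset_left
    refine ⟨sInf S, sSup S, (hScomp.sInf_mem hS).1.1, ?_, (hScomp.sSup_mem hS).1.2, ?_, ?_⟩
    · exact le_csSup hScomp.bddAbove (hScomp.sInf_mem hS)
    · rintro t (⟨ht0, htlt⟩ | ⟨htgt, httf⟩)
      · by_contra hcon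
        push_neg at hcon
        have htS : t ∈ S := ⟨⟨ht0, le_trans htlt.le (hScomp.sInf_mem hS).1.2⟩, hcon⟩
        exact absurd (csInf_le hScomp.bddBelow htS) (not_le.2 htlt)
      · by_contra hcon
        push_neg at hcon
        have htS : t ∈ S := ⟨⟨le_trans (hScomp.sSup_mem hS).1.1 htgt.le, httf⟩, hcon⟩
        exact absurd (le_csSup hScomp.bddAbove htS) (not_le.2 htgt)
    · intro t h1 h2
      exact part1 (sInf S) t (sSup S) (hScomp.sInf_mem hS).1.1 h1.le h2.le
        (hScomp.sSup_mem hS).1.2 (hScomp.sInf_mem hS).2 (hScomp.sSup_mem hS).2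
  · refine ⟨0, 0, le_rfl, le_rfl, htf.le, ?_, ?_⟩
    · rintro t (⟨ht0, htlt⟩ | ⟨htgt, httf⟩)
      · exact absurd (lt_of_le_of_lt ht0 htlt) (lt_irrefl 0)
      · by_contra hcon
        push_neg at hcon
        exact hS ⟨t, ⟨htgt.le, httf⟩, hcon⟩
    · intro t h1 h2
      exact absurd (lt_trans h1 h2) (lt_irrefl 0)
end

section
/- Let T > 0, σ ≥ 0, q ≥ 0, m > 0 and 0 < u_min ≤ u_max with T·u_min ≥ σ. Let p ∈ ℝ³ with p ≠ 0, let p_m ∈ ℝ, and define for w ∈ ℝ³ with w ≠ 0: φ(w) = (1/m)·(T − σ/‖w‖)·⟨p, w⟩ − p_m·q·‖w‖, and set Ψ = (T/m)·‖p‖ − p_m·q. If Ψ > 0, then w* = u_max·p/‖p‖ maximizes φ over the annulus A = {w ∈ ℝ³ : u_min ≤ ‖w‖ ≤ u_max}; if Ψ < 0, then w* = u_min·p/‖p‖ maximizes φ over A. -/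
open RealInnerProductSpace

lemma stmt12_norm_aux (r : ℝ) (hr : 0 ≤ r) (p : EuclideanSpace ℝ (Fin 3)) (hp : p ≠ 0) :
    ‖r • ‖p‖⁻¹ • p‖ = r := by
  have hpn : ‖p‖ ≠ 0 := norm_ne_zero_iff.mpr hp
  rw [norm_smul, norm_smul, norm_inv, norm_norm, Real.norm_eq_abs, abs_of_nonneg hr]
  field_simp

lemma stmt12_inner_aux (r : ℝ) (p : EuclideanSpace ℝ (Fin 3)) (hp : p ≠ 0) :
    ⟪p, r • ‖p‖⁻¹ • p⟫ = r * ‖p‖ := by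
  have hpn : ‖p‖ ≠ 0 := norm_ne_zero_iff.mpr hp
  rw [real_inner_smul_right, real_inner_smul_right, real_inner_self_eq_norm_sq]
  field_simp

/-- Key bound: `φ(w) ≤ ‖w‖ Ψ − σ‖p‖/m`. -/
lemma stmt12_bound (T σ q m u_min : ℝ)
    (hT : 0 < T) (hσ : 0 ≤ σ) (hm : 0 < m)
    (humin : 0 < u_min) (hnet : T * u_min ≥ σ)
    (p : EuclideanSpace ℝ (Fin 3)) (p_m : ℝ)
    (w : EuclideanSpace ℝ (Fin 3)) (hw1 : u_min ≤ ‖w‖) :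
    (1 / m) * (T - σ / ‖w‖) * ⟪p, w⟫ - p_m * q * ‖w‖ ≤
      ‖w‖ * ((T / m) * ‖p‖ - p_m * q) - σ * ‖p‖ / m := by
  have hs : (0:ℝ) < ‖w‖ := lt_of_lt_of_le humin hw1
  have hcoef : 0 ≤ (1 / m) * (T - σ / ‖w‖) := by
    apply mul_nonneg (by positivity)
    rw [sub_nonneg, div_le_iff₀ hs]
    calc σ ≤ T * u_min := hnet
    _ ≤ T * ‖w‖ := by nlinarith
  have hcs : ⟪p, w⟫ ≤ ‖p‖ * ‖w‖ := real_inner_le_norm p w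
  have h1 : (1 / m) * (T - σ / ‖w‖) * ⟪p, w⟫ ≤ (1 / m) * (T - σ / ‖w‖) * (‖p‖ * ‖w‖) :=
    mul_le_mul_of_nonneg_left hcs hcoef
  have h2 : (1 / m) * (T - σ / ‖w‖) * (‖p‖ * ‖w‖) - p_m * q * ‖w‖ =
      ‖w‖ * ((T / m) * ‖p‖ - p_m * q) - σ * ‖p‖ / m := by
    field_simp
    ring
  linarith

/-- Value at `r • ‖p‖⁻¹ • p`. -/
lemma stmt12_value (T σ q m : ℝ) (hm : 0 < m) (r : ℝ) (hr : 0 < r)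
    (p : EuclideanSpace ℝ (Fin 3)) (hp : p ≠ 0) (p_m : ℝ) :
    (1 / m) * (T - σ / ‖r • ‖p‖⁻¹ • p‖) * ⟪p, r • ‖p‖⁻¹ • p⟫ - p_m * q * ‖r • ‖p‖⁻¹ • p‖ =
      r * ((T / m) * ‖p‖ - p_m * q) - σ * ‖p‖ / m := by
  rw [stmt12_norm_aux r hr.le p hp, stmt12_inner_aux r p hp]
  field_simp
  ring

/-- Maximization of the Hamiltonian over the annulus `u_min ≤ ‖w‖ ≤ u_max` for the landing
problem with constant atmospheric pressure `σ`: with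
`φ(w) = (1/m)(T − σ/‖w‖)⟨p, w⟩ − p_m q ‖w‖` and `Ψ = (T/m)‖p‖ − p_m q`,
if `Ψ > 0` then `u_max · p/‖p‖` is a maximizer, and if `Ψ < 0` then `u_min · p/‖p‖` is. -/
theorem stmt12 (T σ q m u_min u_max : ℝ)
    (hT : 0 < T) (hσ : 0 ≤ σ) (hq : 0 ≤ q) (hm : 0 < m)
    (humin : 0 < u_min) (huminmax : u_min ≤ u_max) (hnet : T * u_min ≥ σ)
    (p : EuclideanSpace ℝ (Fin 3)) (hp : p ≠ 0) (p_m : ℝ) :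
    ((T / m) * ‖p‖ - p_m * q > 0 →
      ∀ w : EuclideanSpace ℝ (Fin 3), u_min ≤ ‖w‖ → ‖w‖ ≤ u_max →
        (1 / m) * (T - σ / ‖w‖) * ⟪p, w⟫ - p_m * q * ‖w‖ ≤
        (1 / m) * (T - σ / ‖u_max • ‖p‖⁻¹ • p‖) * ⟪p, u_max • ‖p‖⁻¹ • p⟫
          - p_m * q * ‖u_max • ‖p‖⁻¹ • p‖) ∧
    ((T / m) * ‖p‖ - p_m * q < 0 →
      ∀ w : EuclideanSpace ℝ (Fin 3), u_min ≤ ‖w‖ → ‖w‖ ≤ u_max →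
        (1 / m) * (T - σ / ‖w‖) * ⟪p, w⟫ - p_m * q * ‖w‖ ≤
        (1 / m) * (T - σ / ‖u_min • ‖p‖⁻¹ • p‖) * ⟪p, u_min • ‖p‖⁻¹ • p⟫
          - p_m * q * ‖u_min • ‖p‖⁻¹ • p‖) := by
  constructor
  · intro hΨ w hw1 hw2
    rw [stmt12_value T σ q m hm u_max (lt_of_lt_of_le humin huminmax) p hp p_m]
    have := stmt12_bound T σ q m u_min hT hσ hm humin hnet p p_m w hw1
    nlinarith
  · intro hΨ w hw1 hw2
    rw [stmt12_value T σ q m hm u_min humin p hp p_m]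
    have := stmt12_bound T σ q m u_min hT hσ hm humin hnet p p_m w hw1
    nlinarith
end

section
/- Let t_f > 0, δ ∈ ℝ², and let λ : [0,t_f] → ℝ be integrable. Let v : [0,t_f] → ℝ² be absolutely continuous with v'(t) = λ(t)·δ for almost every t and v(t_f) = 0, and let r : [0,t_f] → ℝ² be absolutely continuous with r'(t) = v(t) for almost every t and r(t_f) = 0. Then r(0) and v(0) are linearly dependent; in fact both are scalar multiples of δ. -/
open MeasureTheory

/-- If the horizontal acceleration keeps a fixed direction `δ` (i.e. `v' = λ(t) δ` a.e.),
`r' = v`, and `r(t_f) = v(t_f) = 0`, then `r(0)` and `v(0)` are scalar multiples of `δ`;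
in particular they are linearly dependent. -/
theorem stmt13 (t_f : ℝ) (htf : 0 < t_f) (δ : EuclideanSpace ℝ (Fin 2))
    (lam : ℝ → ℝ) (hlam : IntervalIntegrable lam volume 0 t_f)
    (v r : ℝ → EuclideanSpace ℝ (Fin 2))
    (hv : ∀ t ∈ Set.Icc (0:ℝ) t_f, v t = v 0 + ∫ s in (0:ℝ)..t, lam s • δ)
    (hvtf : v t_f = 0)
    (hr : ∀ t ∈ Set.Icc (0:ℝ) t_f, r t = r 0 + ∫ s in (0:ℝ)..t, v s)
    (hrtf : r t_f = 0) :
    (∃ a : ℝ, r 0 = a • δ) ∧ (∃ b : ℝ, v 0 = b • δ) ∧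
    ¬ LinearIndependent ℝ ![r 0, v 0] := by
  set F : ℝ → ℝ := fun s => ∫ x in (0:ℝ)..s, lam x with hF
  -- v 0 is a multiple of δ
  have hb : v 0 = (-(F t_f)) • δ := by
    have h1 := hv t_f ⟨le_of_lt htf, le_refl t_f⟩
    rw [hvtf, intervalIntegral.integral_smul_const] at h1
    have : v 0 = -((F t_f) • δ) := by
      rw [eq_comm, neg_eq_iff_add_eq_zero, add_comm]
      exact h1.symm
    rw [this, neg_smul]
  -- continuity of F on the interval
  have hFcont : ContinuousOn F (Set.uIcc (0:ℝ) t_f) :=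
    intervalIntegral.continuousOn_primitive_interval' hlam
      (by rw [Set.uIcc_of_le htf.le]; exact Set.left_mem_Icc.2 htf.le)
  have hFint : IntervalIntegrable F volume 0 t_f :=
    hFcont.intervalIntegrable
  have hFdint : IntervalIntegrable (fun s => F s • δ) volume 0 t_f :=
    (hFcont.smul continuousOn_const).intervalIntegrable
  have hconst : IntervalIntegrable (fun _ : ℝ => v 0) volume 0 t_f :=
    intervalIntegrable_const
  -- compute ∫ v
  have hiv : (∫ s in (0:ℝ)..t_f, v s) = t_f • v 0 + (∫ s in (0:ℝ)..t_f, F s) • δ := by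
    have hcongr : (∫ s in (0:ℝ)..t_f, v s)
        = ∫ s in (0:ℝ)..t_f, (v 0 + F s • δ) := by
      apply intervalIntegral.integral_congr
      intro s hs
      rw [Set.uIcc_of_le htf.le] at hs
      have := hv s hs
      rw [this, intervalIntegral.integral_smul_const]
    rw [hcongr, intervalIntegral.integral_add hconst hFdint,
      intervalIntegral.integral_const, intervalIntegral.integral_smul_const, sub_zero]
  -- r 0 is a multiple of δ
  have hvb : v 0 = (-(F t_f)) • δ := hb
  have ha : r 0 = (-(t_f * (-(F t_f)) + (∫ s in (0:ℝ)..t_f, F s))) • δ := by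
    have h2 := hr t_f ⟨le_of_lt htf, le_refl t_f⟩
    rw [hrtf, hiv, hvb] at h2
    have : r 0 = -(t_f • ((-(F t_f)) • δ) + (∫ s in (0:ℝ)..t_f, F s) • δ) := by
      rw [eq_comm, neg_eq_iff_add_eq_zero, add_comm]
      exact h2.symm
    rw [this, smul_smul, ← add_smul, ← neg_smul]
  refine ⟨⟨_, ha⟩, ⟨_, hb⟩, ?_⟩
  intro hli
  set a : ℝ := -(t_f * (-(F t_f)) + (∫ s in (0:ℝ)..t_f, F s)) with hadef
  set b : ℝ := -(F t_f) with hbdef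
  have hrel : b • r 0 + (-a) • v 0 = 0 := by
    rw [ha, hb, smul_smul, smul_smul, ← add_smul]
    ring_nf
    simp [mul_comm]
  obtain ⟨hb0, ha0⟩ := (LinearIndependent.pair_iff.mp hli) b (-a) hrel
  have ha' : a = 0 := neg_eq_zero.mp ha0
  have hr0 : r 0 = 0 := by rw [ha, ha', zero_smul]
  exact hli.ne_zero 0 (by simpa using hr0)
end

section
/- Let θ ∈ [0, π/2) and let p : ℝ → ℝ³ be differentiable at a point t. (i) If p(t) ≠ 0 and p_z(t) > ‖p(t)‖·cos(θ), then F∘p is differentiable at t with (F∘p)'(t) = ⟨p'(t), p(t)/‖p(t)‖⟩. (ii) If p̄(t) ≠ 0 and p_z(t) < ‖p(t)‖·cos(θ), then F∘p is differentiable at t with (F∘p)'(t) = sin(θ)·⟨p̄'(t), p̄(t)/‖p̄(t)‖⟩ + cos(θ)·p_z'(t). In both cases (F∘p)'(t) = ⟨p'(t), d(t)⟩, where d(t) is the maximizer of d ↦ ⟨p(t), d⟩ over D (namely d(t) = p(t)/‖p(t)‖ in case (i) and d(t) = (sin(θ)·p̄(t)/‖p̄(t)‖, cos(θ)) in case (ii)).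 -/
open RealInnerProductSpace

/-- `F(p) = sup_{d ∈ D} ⟨p, d⟩` (equal to `‖p‖` if `p_z ≥ ‖p‖ cos θ`, and to
`sin θ ‖p̄‖ + cos θ p_z` otherwise). -/
noncomputable def F (θ : ℝ) (p : EuclideanSpace ℝ (Fin 3)) : ℝ :=
  sSup ((fun d : EuclideanSpace ℝ (Fin 3) => ⟪p, d⟫) '' D θ)

lemma inner_split (q d : EuclideanSpace ℝ (Fin 3)) :
    ⟪q, d⟫ = ⟪bar q, bar d⟫ + q 2 * d 2 := by
  simp [PiLp.inner_apply, bar, Fin.sum_univ_three, Fin.sum_univ_two, RCLike.inner_apply]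
  ring

lemma norm_split (q : EuclideanSpace ℝ (Fin 3)) : ‖q‖^2 = ‖bar q‖^2 + (q 2)^2 := by
  rw [← real_inner_self_eq_norm_sq, ← real_inner_self_eq_norm_sq, inner_split]; ring

lemma bar_withZ (δ : EuclideanSpace ℝ (Fin 2)) (c : ℝ) : bar (withZ δ c) = δ := by
  ext i; fin_cases i <;> rfl

lemma withZ_two (δ : EuclideanSpace ℝ (Fin 2)) (c : ℝ) : withZ δ c 2 = c := rfl

lemma F_eq_norm {θ : ℝ} {q : EuclideanSpace ℝ (Fin 3)} (hq : q ≠ 0)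
    (h : ‖q‖ * Real.cos θ ≤ q 2) : F θ q = ‖q‖ := by
  have hn : 0 < ‖q‖ := norm_pos_iff.2 hq
  apply IsGreatest.csSup_eq
  constructor
  · refine ⟨‖q‖⁻¹ • q, ⟨norm_smul_inv_norm hq, ?_⟩, ?_⟩
    · show ‖q‖⁻¹ • q 2 ≥ Real.cos θ
      rw [smul_eq_mul, ge_iff_le]
      rw [← mul_le_mul_iff_right₀ hn, ← mul_assoc, mul_inv_cancel₀ hn.ne', one_mul]
      exact h
    · show ⟪q, ‖q‖⁻¹ • q⟫ = ‖q‖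
      rw [real_inner_smul_right, real_inner_self_eq_norm_sq]
      field_simp
  · rintro x ⟨d, ⟨hd1, _⟩, rfl⟩
    calc ⟪q, d⟫ ≤ ‖q‖ * ‖d‖ := real_inner_le_norm q d
      _ = ‖q‖ := by rw [hd1, mul_one]

lemma key_ineq_s15 {a b u z s c N : ℝ} (ha : 0 < a) (hu : 0 ≤ u) (hs : 0 ≤ s) (hc : 0 < c)
    (hN2 : N^2 = a^2 + b^2) (hb : b < N * c)
    (huz : u^2 + z^2 = 1) (hsc : s^2 + c^2 = 1) (hzc : c ≤ z) :
    a * u + b * z ≤ a * s + b * c := by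
  have hus : u ≤ s := by nlinarith
  rcases le_or_gt b 0 with hb0 | hb0
  · nlinarith
  · have hq2' : b^2 < (a^2 + b^2) * c^2 := by nlinarith
    have h3 : b^2 * s^2 < a^2 * c^2 := by nlinarith
    have h4 : b * s < a * c := by nlinarith [mul_nonneg hb0.le hs, mul_pos ha hc]
    have h5 : b * (u + s) < a * (z + c) := by
      nlinarith [mul_le_mul_of_nonneg_left hus hb0.le, mul_le_mul_of_nonneg_left hzc ha.le]
    rcases eq_or_lt_of_le (by positivity : (0:ℝ) ≤ u + s) with h0 | hpos
    · have hu0 : u = 0 := by linarith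
      have hs0 : s = 0 := by linarith
      have hc2 : (c - 1) * (c + 1) = 0 := by rw [hs0] at hsc; linear_combination hsc
      have hc1 : c = 1 := by
        rcases mul_eq_zero.1 hc2 with h | h
        · linarith
        · linarith
      have hz1 : z ≤ 1 := by nlinarith [sq_nonneg (z - 1)]
      rw [hu0, hs0, hc1]
      nlinarith
    · have e1 : a * s + b * c - (a * u + b * z)
          = (z - c) * (a * (z + c) - b * (u + s)) / (u + s) := by
        rw [eq_div_iff hpos.ne']
        linear_combination a * hsc - a * huz
      have h6 : 0 ≤ (z - c) * (a * (z + c) - b * (u + s)) / (u + s) :=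
        div_nonneg (mul_nonneg (by linarith) (by linarith)) hpos.le
      linarith

lemma F_eq_cone {θ : ℝ} (hθ0 : 0 ≤ θ) (hθ1 : θ < Real.pi / 2)
    {q : EuclideanSpace ℝ (Fin 3)} (hbar : bar q ≠ 0) (h : q 2 < ‖q‖ * Real.cos θ) :
    F θ q = Real.sin θ * ‖bar q‖ + Real.cos θ * q 2 := by
  have hpi := Real.pi_pos
  have hc : 0 < Real.cos θ := Real.cos_pos_of_mem_Ioo ⟨by linarith, hθ1⟩
  have hs : 0 ≤ Real.sin θ := Real.sin_nonneg_of_nonneg_of_le_pi hθ0 (by linarith)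
  have hsc : Real.sin θ ^ 2 + Real.cos θ ^ 2 = 1 := Real.sin_sq_add_cos_sq θ
  have ha : 0 < ‖bar q‖ := norm_pos_iff.2 hbar
  set a := ‖bar q‖ with ha_def
  set b := q 2 with hb_def
  have hq2 : ‖q‖^2 = a^2 + b^2 := norm_split q
  have hb : b < ‖q‖ * Real.cos θ := h
  have hqn : 0 ≤ ‖q‖ := norm_nonneg q
  apply IsGreatest.csSup_eq
  constructor
  · refine ⟨withZ (Real.sin θ • a⁻¹ • bar q) (Real.cos θ), ⟨?_, ?_⟩, ?_⟩
    · have h1 : ‖bar (withZ (Real.sin θ • a⁻¹ • bar q) (Real.cos θ))‖ = Real.sin θ := by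
        rw [bar_withZ, norm_smul, norm_smul, norm_inv, Real.norm_eq_abs, Real.norm_eq_abs,
          abs_of_nonneg hs, abs_of_pos ha]
        field_simp
        rfl
      have h2 := norm_split (withZ (Real.sin θ • a⁻¹ • bar q) (Real.cos θ))
      rw [h1, withZ_two, hsc] at h2
      nlinarith [norm_nonneg (withZ (Real.sin θ • a⁻¹ • bar q) (Real.cos θ))]
    · rw [withZ_two]
    · dsimp only
      rw [inner_split, bar_withZ, withZ_two, real_inner_smul_right, real_inner_smul_right,
        real_inner_self_eq_norm_sq]
      field_simp
      ring
  · rintro x ⟨d, ⟨hd1, hd2⟩, rfl⟩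
    dsimp only
    rw [inner_split]
    have h1 : ⟪bar q, bar d⟫ ≤ a * ‖bar d‖ := by
      calc ⟪bar q, bar d⟫ ≤ ‖bar q‖ * ‖bar d‖ := real_inner_le_norm _ _
        _ = a * ‖bar d‖ := rfl
    set u := ‖bar d‖ with hu_def
    set z := d 2 with hz_def
    have hu : 0 ≤ u := norm_nonneg _
    have huz : u^2 + z^2 = 1 := by have := norm_split d; rw [hd1] at this; nlinarith
    have hzc : Real.cos θ ≤ z := hd2
    have key : a * u + b * z ≤ a * Real.sin θ + b * Real.cos θ :=
      key_ineq_s15 ha hu hs hc hq2 hb huz hsc hzc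
    linarith [h1, key]

/-- `bar` as a continuous linear map. -/
noncomputable def barL : EuclideanSpace ℝ (Fin 3) →L[ℝ] EuclideanSpace ℝ (Fin 2) :=
  LinearMap.toContinuousLinearMap
    { toFun := fun q => bar q
      map_add' := by intro a b; ext i; fin_cases i <;> simp [bar]
      map_smul' := by intro c a; ext i; fin_cases i <;> simp [bar] }

/-- Derivative of the norm along a differentiable curve avoiding the origin. -/
lemma norm_deriv {E : Type*} [NormedAddCommGroup E] [InnerProductSpace ℝ E]
    {f : ℝ → E} {f' : E} {t : ℝ} (hf : HasDerivAt f f' t) (h0 : f t ≠ 0) :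
    HasDerivAt (fun s => ‖f s‖) ⟪f', ‖f t‖⁻¹ • f t⟫ t := by
  have hn : (‖f t‖ : ℝ) ≠ 0 := norm_ne_zero_iff.2 h0
  have h1 : HasDerivAt (fun s => ‖f s‖ ^ 2) (2 * ⟪f t, f'⟫) t := hf.norm_sq
  have h3 := h1.sqrt (by simpa using pow_ne_zero 2 hn)
  have he : (fun y => Real.sqrt (‖f y‖ ^ 2)) = fun y => ‖f y‖ :=
    funext fun y => Real.sqrt_sq (norm_nonneg _)
  rw [he] at h3
  convert h3 using 1
  rw [Real.sqrt_sq (norm_nonneg _), real_inner_smul_right, real_inner_comm]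
  field_simp

/-- Differentiability of `F ∘ p` off the switching surface: the derivative is
`⟨p'(t), d(t)⟩` where `d(t)` is the maximizer of `d ↦ ⟨p(t), d⟩` over `D`. -/
theorem stmt15 (θ : ℝ) (hθ0 : 0 ≤ θ) (hθ1 : θ < Real.pi / 2)
    (p : ℝ → EuclideanSpace ℝ (Fin 3)) (p' : EuclideanSpace ℝ (Fin 3)) (t : ℝ)
    (hderiv : HasDerivAt p p' t) :
    -- (i) if `p(t) ≠ 0` and `p_z(t) > ‖p(t)‖ cos θ`, then `(F∘p)'(t) = ⟨p'(t), p(t)/‖p(t)‖⟩`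
    ((p t ≠ 0 ∧ p t 2 > ‖p t‖ * Real.cos θ) →
      HasDerivAt (fun s => F θ (p s)) ⟪p', ‖p t‖⁻¹ • p t⟫ t) ∧
    -- (ii) if `p̄(t) ≠ 0` and `p_z(t) < ‖p(t)‖ cos θ`, then
    -- `(F∘p)'(t) = sin θ ⟨p̄'(t), p̄(t)/‖p̄(t)‖⟩ + cos θ p_z'(t) = ⟨p'(t), d(t)⟩`
    ((bar (p t) ≠ 0 ∧ p t 2 < ‖p t‖ * Real.cos θ) →
      HasDerivAt (fun s => F θ (p s))
        (Real.sin θ * ⟪bar p', ‖bar (p t)‖⁻¹ • bar (p t)⟫ + Real.cos θ * p' 2) t ∧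
      Real.sin θ * ⟪bar p', ‖bar (p t)‖⁻¹ • bar (p t)⟫ + Real.cos θ * p' 2
        = ⟪p', withZ (Real.sin θ • ‖bar (p t)‖⁻¹ • bar (p t)) (Real.cos θ)⟫) := by
  have hz : HasDerivAt (fun s => p s 2) (p' 2) t := by
    exact
      (EuclideanSpace.proj (2 : Fin 3)).hasFDerivAt.comp_hasDerivAt t hderiv
  have hbd : HasDerivAt (fun s => bar (p s)) (bar p') t := by
    exact barL.hasFDerivAt.comp_hasDerivAt t hderiv
  have hcz : ContinuousAt (fun s => p s 2) t := hz.continuousAt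
  have hcn : ContinuousAt (fun s => ‖p s‖) t := hderiv.continuousAt.norm
  constructor
  · rintro ⟨hpt0, hpt2⟩
    have hct : ContinuousAt (fun s => p s 2 - ‖p s‖ * Real.cos θ) t :=
      hcz.sub (hcn.mul continuousAt_const)
    have hev : ∀ᶠ s in nhds t, 0 < p s 2 - ‖p s‖ * Real.cos θ :=
      hct.eventually (eventually_gt_nhds (by dsimp only; linarith))
    have heq : (fun s => F θ (p s)) =ᶠ[nhds t] fun s => ‖p s‖ := by
      filter_upwards [hev] with s hs
      have hps : p s ≠ 0 := by
        intro h0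
        rw [h0] at hs
        simp at hs
      exact F_eq_norm hps (by linarith)
    exact (norm_deriv hderiv hpt0).congr_of_eventuallyEq heq
  · rintro ⟨hbar0, hlt⟩
    constructor
    · have hct : ContinuousAt (fun s => ‖p s‖ * Real.cos θ - p s 2) t :=
        (hcn.mul continuousAt_const).sub hcz
      have hev1 : ∀ᶠ s in nhds t, 0 < ‖p s‖ * Real.cos θ - p s 2 :=
        hct.eventually (eventually_gt_nhds (by dsimp only; linarith))
      have hcb : ContinuousAt (fun s => ‖bar (p s)‖) t := hbd.continuousAt.norm
      have hev2 : ∀ᶠ s in nhds t, 0 < ‖bar (p s)‖ :=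
        hcb.eventually (eventually_gt_nhds (by dsimp only; exact norm_pos_iff.2 hbar0))
      have heq : (fun s => F θ (p s)) =ᶠ[nhds t]
          fun s => Real.sin θ * ‖bar (p s)‖ + Real.cos θ * p s 2 := by
        filter_upwards [hev1, hev2] with s hs1 hs2
        exact F_eq_cone hθ0 hθ1 (norm_pos_iff.1 hs2) (by linarith)
      have hD := ((norm_deriv hbd hbar0).const_mul (Real.sin θ)).add (hz.const_mul (Real.cos θ))
      exact hD.congr_of_eventuallyEq heq
    · simp only [inner_split, bar_withZ, withZ_two, real_inner_smul_right]
      ring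
end
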